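/- Monotone dependence of equilibrium-type solutions on the last coordinate: let p, q ∈ (0,1)^n satisfy the equal-flow conditions λ_i p_i (1 − p_{i+1}) = λ_n p_n for all i = 1, …, n−1, and λ_i q_i (1 − q_{i+1}) = λ_n q_n for all i = 1, …, n−1 (where p_{n+1}, q_{n+1} are not needed since the last condition reads λ_{n−1} p_{n−1}(1 − p_n) = λ_n p_n). If p_n > q_n, then p_i > q_i for every i = 1, …, n. -/

import Mathlib

open scoped BigOperators

/-- Extend a vector `x : Fin n → ℝ` to a function on `ℕ` (zero outside the range). -/
noncomputable def extVec {n : ℕ} (x : Fin n → ℝ) (j : ℕ) : ℝ :=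
  if h : j < n then x ⟨j, h⟩ else 0

/-- The flow from site `j` to site `j+1` (1-based paper indexing of the rates;
`j = 0` is the initiation flow, `j = n` is the exit flow) in the closed-loop
ribosome flow model with negative feedback `u = k g(y)`. Densities are stored
0-based: Lean index `i` corresponds to the paper's site `i+1`. -/
noncomputable def rfmFlow (n : ℕ) (lam : ℕ → ℝ) (k : ℝ) (g : ℝ → ℝ)
    (x : Fin n → ℝ) (j : ℕ) : ℝ :=
  if j = 0 then lam 0 * k * g (lam n * extVec x (n - 1)) * (1 - extVec x 0)
  else if j = n then lam n * extVec x (n - 1)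
  else lam j * extVec x (j - 1) * (1 - extVec x j)

/-- The vector field of the closed-loop RFM with negative feedback. -/
noncomputable def rfmField (n : ℕ) (lam : ℕ → ℝ) (k : ℝ) (g : ℝ → ℝ)
    (x : Fin n → ℝ) : Fin n → ℝ :=
  fun i => rfmFlow n lam k g x i.val - rfmFlow n lam k g x (i.val + 1)

/-!
Read each equal-flow condition as `λ_i p_i (1 - p_{i+1}) = λ_n p_n`. Since `p_n > q_n`, the right-hand
side is larger for `p` than for `q`, so `p_i (1 - p_{i+1}) > q_i (1 - q_{i+1})` for every `i`. Going
backwards from `i = n`: if `p_{i+1} > q_{i+1}` then `1 - p_{i+1} < 1 - q_{i+1}`, so the factor `p_i`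
must beat `q_i`.
-/

theorem lt_of_mul_one_sub_lt {a b c d : ℝ} (ha : 0 ≤ a) (hd : d ≤ 1) (hcd : c ≤ d)
    (h : a * (1 - c) < b * (1 - d)) : a < b := by
  by_contra! hba
  exact h.not_ge (mul_le_mul hba (by linarith) (by linarith) ha)

theorem lt_of_flow_lt_of_lt {m : ℕ} {x y : ℕ → ℝ} (hy : ∀ j < m, 0 ≤ y j)
    (hx : ∀ j < m, x (j + 1) ≤ 1)
    (hflow : ∀ j < m, y j * (1 - y (j + 1)) < x j * (1 - x (j + 1))) (hlast : y m < x m) :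
    ∀ j ≤ m, y j < x j := by
  intro j hj
  induction hj using Nat.decreasingInduction with
  | self => exact hlast
  | of_succ j hj ih => exact lt_of_mul_one_sub_lt (hy j hj) (hx j hj) ih.le (hflow j hj)

theorem extVec_of_lt {n : ℕ} (x : Fin n → ℝ) {j : ℕ} (hj : j < n) : extVec x j = x ⟨j, hj⟩ :=
  dif_pos hj

theorem extVec_val {n : ℕ} (x : Fin n → ℝ) (i : Fin n) : extVec x i = x i :=
  extVec_of_lt x i.isLt

theorem rfm_equal_flow_monotone_in_last_general
    (n : ℕ) (lam : ℕ → ℝ) (hlam : ∀ i, 1 ≤ i → i ≤ n → 0 < lam i)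
    (p q : Fin n → ℝ)
    (hp : ∀ i, p i ∈ Set.Ioo (0:ℝ) 1) (hq : ∀ i, q i ∈ Set.Ioo (0:ℝ) 1)
    (hpflow : ∀ j : ℕ, j < n - 1 →
      lam (j + 1) * extVec p j * (1 - extVec p (j + 1)) = lam n * extVec p (n - 1))
    (hqflow : ∀ j : ℕ, j < n - 1 →
      lam (j + 1) * extVec q j * (1 - extVec q (j + 1)) = lam n * extVec q (n - 1))
    (hlast : extVec q (n - 1) < extVec p (n - 1)) :
    ∀ i : Fin n, q i < p i := by
  intro i
  have hflow : ∀ j < n - 1,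
      extVec q j * (1 - extVec q (j + 1)) < extVec p j * (1 - extVec p (j + 1)) := by
    intro j hj
    have hexit : lam n * extVec q (n - 1) < lam n * extVec p (n - 1) :=
      mul_lt_mul_of_pos_left hlast (hlam n (by omega) le_rfl)
    rw [← hpflow j hj, ← hqflow j hj, mul_assoc, mul_assoc] at hexit
    exact lt_of_mul_lt_mul_left hexit (hlam (j + 1) (by omega) (by omega)).le
  have hq_nonneg : ∀ j < n - 1, 0 ≤ extVec q j := fun j hj ↦ by
    rw [extVec_of_lt q (by omega : j < n)]; exact (hq _).1.le
  have hp_le_one : ∀ j < n - 1, extVec p (j + 1) ≤ 1 := fun j hj ↦ by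
    rw [extVec_of_lt p (by omega : j + 1 < n)]; exact (hp _).2.le
  simpa only [extVec_val] using
    lt_of_flow_lt_of_lt hq_nonneg hp_le_one hflow hlast i (by omega)

/-- Monotone dependence of equal-flow solutions on the last
coordinate: if `p, q ∈ (0,1)^n` satisfy the equal-flow conditions
`λ_i p_i (1 - p_{i+1}) = λ_n p_n` for `i = 1, …, n-1` (1-based; in Lean's
0-based indexing: `lam (j+1) * p j * (1 - p (j+1)) = lam n * p (n-1)` for
`j = 0, …, n-2`) and likewise for `q`, and `p_n > q_n`, then `p_i > q_i`
for every `i`. -/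
theorem rfm_equal_flow_monotone_in_last
    (n : ℕ) (hn : 2 ≤ n) (lam : ℕ → ℝ) (hlam : ∀ i, 1 ≤ i → i ≤ n → 0 < lam i)
    (p q : Fin n → ℝ)
    (hp : ∀ i, p i ∈ Set.Ioo (0:ℝ) 1) (hq : ∀ i, q i ∈ Set.Ioo (0:ℝ) 1)
    (hpflow : ∀ j : ℕ, j < n - 1 →
      lam (j + 1) * extVec p j * (1 - extVec p (j + 1)) = lam n * extVec p (n - 1))
    (hqflow : ∀ j : ℕ, j < n - 1 →
      lam (j + 1) * extVec q j * (1 - extVec q (j + 1)) = lam n * extVec q (n - 1))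
    (hlast : extVec q (n - 1) < extVec p (n - 1)) :
    ∀ i : Fin n, q i < p i :=
  rfm_equal_flow_monotone_in_last_general n lam hlam p q hp hq hpflow hqflow hlast
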